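/- Let σ > 0 and define U(n,u) = Φ(u + σ n^{−1/2}/2)/Φ(u) for u ≥ 0, where Φ is the standard normal CDF. Then there exists a constant C > 0 such that for all n ≥ 1 and all u ∈ [0,∞), |U(n,u) − 1 − σ n^{−1/2} φ(u)/(2Φ(u))| ≤ C/n, where φ is the standard normal density. -/

import Mathlib

open Real

/-- The standard normal cumulative distribution function. -/
noncomputable def stdNormalCDF (u : ℝ) : ℝ :=
  ∫ x in Set.Iic u, Real.exp (-x ^ 2 / 2) / Real.sqrt (2 * π)

/-- The standard normal density. -/
noncomputable def stdNormalPDF (u : ℝ) : ℝ :=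
  Real.exp (-u ^ 2 / 2) / Real.sqrt (2 * π)


/-!
Since `Φ' = φ` and `|φ'(x)| = |x| φ(x) ≤ 1/2`, the first-order Taylor remainder of `Φ` at `u`
with step `h` is at most `h² / 2`. For `u ≥ 0` we have `Φ(u) ≥ Φ(0) = 1/2`, and the quantity in
question is exactly that remainder, for `h = σ n^{-1/2} / 2`, divided by `Φ(u)`; hence it is at
most `h² = σ² / (4n)`.
-/

open MeasureTheory Set ProbabilityTheory
open scoped NNReal

theorem norm_sub_sub_smul_le_of_lipschitzWith_deriv {E : Type*} [NormedAddCommGroup E]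
    [NormedSpace ℝ E] {f f' : ℝ → E} {L : ℝ≥0} (hf : ∀ x, HasDerivAt f (f' x) x)
    (hf' : LipschitzWith L f') (a h : ℝ) :
    ‖f (a + h) - f a - h • f' a‖ ≤ L * h ^ 2 := by
  set g : ℝ → E := fun t => f (a + t) - f a - t • f' a
  have hg : ∀ t, HasDerivAt g (f' (a + t) - f' a) t := fun t => by
    have := (((hf (a + t)).comp_const_add a t).sub_const (f a)).sub
      ((hasDerivAt_id t).smul_const (f' a))
    exact this.congr_deriv (by simp)
  have hg' : ∀ t ∈ Metric.closedBall (0 : ℝ) |h|, ‖f' (a + t) - f' a‖ ≤ L * |h| := by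
    intro t ht
    rw [mem_closedBall_zero_iff, Real.norm_eq_abs] at ht
    calc ‖f' (a + t) - f' a‖ ≤ L * dist (a + t) a := by
          rw [← dist_eq_norm]; exact hf'.dist_le_mul _ _
      _ ≤ L * |h| := by rw [Real.dist_eq, add_sub_cancel_left]; gcongr
  have := (convex_closedBall (0 : ℝ) |h|).norm_image_sub_le_of_norm_hasDerivWithin_le (x := 0)
    (y := h) (fun t _ => (hg t).hasDerivWithinAt) hg' (Metric.mem_closedBall_self (abs_nonneg h))
    (by simp)
  simpa [g, ← sq_abs h, pow_two, mul_assoc] using this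

theorem stdNormalPDF_eq_gaussianPDFReal : stdNormalPDF = gaussianPDFReal 0 1 := by
  ext x
  simp only [stdNormalPDF, gaussianPDFReal_def, NNReal.coe_one, mul_one, sub_zero, div_eq_inv_mul]

theorem stdNormalPDF_pos (x : ℝ) : 0 < stdNormalPDF x := by
  rw [stdNormalPDF_eq_gaussianPDFReal]; exact gaussianPDFReal_pos 0 1 x one_ne_zero

theorem hasDerivAt_stdNormalPDF (x : ℝ) : HasDerivAt stdNormalPDF (-x * stdNormalPDF x) x := by
  have h := ((((hasDerivAt_pow 2 x).neg).div_const 2).exp).div_const (√(2 * π))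
  exact h.congr_deriv (by simp only [stdNormalPDF, Pi.neg_apply, Nat.cast_ofNat, Nat.add_one_sub_one, pow_one]; ring)

theorem abs_mul_stdNormalPDF_le_half (x : ℝ) : |x| * stdNormalPDF x ≤ 1 / 2 := by
  have habs : |x| ≤ exp (x ^ 2 / 2) := by
    nlinarith [add_one_le_exp (x ^ 2 / 2), sq_nonneg (|x| - 1), sq_abs x]
  have hsqrt : 2 ≤ √(2 * π) := by
    nlinarith [Real.sq_sqrt (by positivity : (0 : ℝ) ≤ 2 * π), Real.sqrt_nonneg (2 * π), pi_gt_three]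
  rw [stdNormalPDF, neg_div, exp_neg, mul_div_assoc', div_le_div_iff₀ (by positivity) two_pos]
  calc |x| * (exp (x ^ 2 / 2))⁻¹ * 2 ≤ 1 * 2 := by
        gcongr; exact mul_inv_le_of_le_mul₀ (exp_pos _).le zero_le_one (by simpa using habs)
    _ ≤ 1 * √(2 * π) := by linarith

theorem lipschitzWith_stdNormalPDF : LipschitzWith (1 / 2) stdNormalPDF :=
  lipschitzWith_of_nnnorm_deriv_le (fun x => (hasDerivAt_stdNormalPDF x).differentiableAt)
    fun x => by
      rw [(hasDerivAt_stdNormalPDF x).deriv, ← NNReal.coe_le_coe, coe_nnnorm, Real.norm_eq_abs,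
        abs_mul, abs_neg, abs_of_pos (stdNormalPDF_pos x)]
      simpa using abs_mul_stdNormalPDF_le_half x

theorem integrable_stdNormalPDF : Integrable stdNormalPDF :=
  stdNormalPDF_eq_gaussianPDFReal ▸ integrable_gaussianPDFReal 0 1

theorem stdNormalCDF_sub (a b : ℝ) :
    stdNormalCDF b - stdNormalCDF a = ∫ x in a..b, stdNormalPDF x :=
  intervalIntegral.integral_Iic_sub_Iic integrable_stdNormalPDF.integrableOn
    integrable_stdNormalPDF.integrableOn

theorem stdNormalCDF_zero : stdNormalCDF 0 = 1 / 2 := by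
  have htotal : ∫ x, stdNormalPDF x = 1 := by
    rw [stdNormalPDF_eq_gaussianPDFReal]; exact integral_gaussianPDFReal_eq_one 0 one_ne_zero
  have hsymm : stdNormalCDF 0 = ∫ x in Ioi 0, stdNormalPDF x := by
    simpa [stdNormalCDF, stdNormalPDF] using integral_comp_neg_Iic 0 stdNormalPDF
  have := intervalIntegral.integral_Iic_add_Ioi (b := 0) integrable_stdNormalPDF.integrableOn
    integrable_stdNormalPDF.integrableOn
  rw [htotal, ← hsymm] at this
  change stdNormalCDF 0 + stdNormalCDF 0 = 1 at this
  linarith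

theorem half_le_stdNormalCDF {u : ℝ} (hu : 0 ≤ u) : 1 / 2 ≤ stdNormalCDF u := by
  have h := stdNormalCDF_sub 0 u
  have : 0 ≤ ∫ x in (0 : ℝ)..u, stdNormalPDF x :=
    intervalIntegral.integral_nonneg hu fun x _ => (stdNormalPDF_pos x).le
  linarith [stdNormalCDF_zero]

theorem hasDerivAt_stdNormalCDF (u : ℝ) : HasDerivAt stdNormalCDF (stdNormalPDF u) u := by
  have hcont : Continuous stdNormalPDF := by unfold stdNormalPDF; fun_prop
  have h : HasDerivAt (fun v => stdNormalCDF 0 + ∫ x in (0 : ℝ)..v, stdNormalPDF x)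
      (stdNormalPDF u) u :=
    (intervalIntegral.integral_hasDerivAt_right integrable_stdNormalPDF.intervalIntegrable
      (hcont.stronglyMeasurableAtFilter _ _) hcont.continuousAt).const_add _
  exact h.congr_of_eventuallyEq (Filter.Eventually.of_forall fun v => by
    simp only [← stdNormalCDF_sub 0 v, add_sub_cancel])

theorem abs_stdNormalCDF_sub_sub_mul_le (u h : ℝ) :
    |stdNormalCDF (u + h) - stdNormalCDF u - h * stdNormalPDF u| ≤ h ^ 2 / 2 := by
  have := norm_sub_sub_smul_le_of_lipschitzWith_deriv hasDerivAt_stdNormalCDF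
    lipschitzWith_stdNormalPDF u h
  simpa [div_eq_inv_mul] using this

theorem U_expansion_uniform (σ : ℝ) (hσ : 0 < σ) :
    ∃ C > 0, ∀ n : ℕ, 1 ≤ n → ∀ u : ℝ, 0 ≤ u →
      |stdNormalCDF (u + σ * (Real.sqrt n)⁻¹ / 2) / stdNormalCDF u
          - 1 - σ * (Real.sqrt n)⁻¹ * stdNormalPDF u / (2 * stdNormalCDF u)|
        ≤ C / n := by
  refine ⟨σ ^ 2 / 4, by positivity, fun n _ u hu => ?_⟩
  set h := σ * (√n)⁻¹ / 2 with h_def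
  have hΦ : 1 / 2 ≤ stdNormalCDF u := half_le_stdNormalCDF hu
  have hΦpos : 0 < stdNormalCDF u := by linarith
  have hsq : h ^ 2 = σ ^ 2 / 4 / n := by
    rw [h_def, div_pow, mul_pow, inv_pow, Real.sq_sqrt n.cast_nonneg]; ring
  have hremainder : stdNormalCDF (u + h) / stdNormalCDF u - 1
      - σ * (√n)⁻¹ * stdNormalPDF u / (2 * stdNormalCDF u)
      = (stdNormalCDF (u + h) - stdNormalCDF u - h * stdNormalPDF u) / stdNormalCDF u := by
    rw [h_def]; field_simp
  rw [hremainder, abs_div, abs_of_pos hΦpos, div_le_iff₀ hΦpos]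
  calc _ ≤ h ^ 2 / 2 := abs_stdNormalCDF_sub_sub_mul_le u h
    _ = σ ^ 2 / 4 / n * (1 / 2) := by rw [hsq]; ring
    _ ≤ σ ^ 2 / 4 / n * stdNormalCDF u := by gcongr
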